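/- arXiv:2012.15034 — 2 statements merged into one kernel-verified Lean document; each statement's English description precedes it below -/
import Mathlib

section
/- Segmenting a cross-level edge preserves path sums: if G' is obtained from a weighted DAG G by replacing an edge (u,v) of weight w with a path u → z₁ → … → z_k → v through new vertices, where one edge of the new path has weight w and all others have weight 1, then for all original vertices a, b, the sum over paths from a to b of products of edge weights is the same in G and G'. -/
/-!
Inserting the chain `z₀ ⋯ z_{k-1}` into every step `u → v` maps the paths of `G` from `a` to `b`
injectively onto the paths of `G'` from `a` to `b`: deleting the new vertices inverts the map, and
since each `zᵢ` has in- and out-degree one, a path of `G'` can enter the chain only from `u` and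
must then run through it to `v`. The inserted chain has weight `∏ⱼ w j = c u v`, so the bijection
preserves weights and the two path sums agree term by term.
-/

def IsPath {V : Type*} (E : V → V → Prop) (u v : V) (l : List V) : Prop :=
  l ≠ [] ∧ l.Chain' E ∧ l.head? = some u ∧ l.getLast? = some v

def pathWeight {V R : Type*} [CommRing R] (c : V → V → R) (l : List V) : R :=
  ((l.zip l.tail).map fun p => c p.1 p.2).prod

noncomputable def pathSum {V R : Type*} [CommRing R] (E : V → V → Prop) (c : V → V → R)
    (u v : V) : R :=
  ∑ᶠ l ∈ {l : List V | IsPath E u v l}, pathWeight c l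

/-- The edge relation of the segmented graph: the edge `u → v` is replaced by the chain
`u → z₀ → z₁ → ⋯ → z_{k-1} → v` through `k` new vertices. -/
def segE {V : Type*} (E : V → V → Prop) (u v : V) (k : ℕ) :
    V ⊕ Fin k → V ⊕ Fin k → Prop
  | Sum.inl a, Sum.inl b => E a b ∧ ¬(a = u ∧ b = v)
  | Sum.inl a, Sum.inr i => a = u ∧ (i : ℕ) = 0
  | Sum.inr i, Sum.inr j => (j : ℕ) = (i : ℕ) + 1
  | Sum.inr i, Sum.inl b => (i : ℕ) = k - 1 ∧ b = v

/-- The weights of the segmented graph: original edges keep their weights, and the `k+1`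
edges of the new chain carry the weights `w 0, w 1, …, w k`. -/
def segC {V R : Type*} {k : ℕ} (c : V → V → R) (w : Fin (k + 1) → R) :
    V ⊕ Fin k → V ⊕ Fin k → R
  | Sum.inl a, Sum.inl b => c a b
  | Sum.inl _, Sum.inr _ => w 0
  | Sum.inr i, _ => w i.succ

section Paths

variable {W R : Type*} {E : W → W → Prop} {x y z : W} {l : List W}

lemma isPath_singleton (E : W → W → Prop) (x : W) : IsPath E x x [x] :=
  ⟨List.cons_ne_nil _ _, List.isChain_singleton _, rfl, rfl⟩

lemma IsPath.cons (h : IsPath E y z l) (hxy : E x y) : IsPath E x z (x :: l) := by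
  obtain ⟨hne, hchain, hhead, hlast⟩ := h
  obtain ⟨y', l, rfl⟩ := List.exists_cons_of_ne_nil hne
  obtain rfl : y' = y := by simpa using hhead
  exact ⟨List.cons_ne_nil _ _, List.isChain_cons_cons.2 ⟨hxy, hchain⟩, rfl,
    by rwa [List.getLast?_cons_cons]⟩

variable [CommRing R]

lemma pathWeight_cons_cons (c : W → W → R) (a b : W) (l : List W) :
    pathWeight c (a :: b :: l) = c a b * pathWeight c (b :: l) := by
  simp [pathWeight]

lemma pathWeight_cons_of_head? (c : W → W → R) (x : W) (h : l.head? = some y) :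
    pathWeight c (x :: l) = c x y * pathWeight c l := by
  obtain ⟨l, rfl⟩ := List.head?_eq_some_iff.1 h
  exact pathWeight_cons_cons c x y l

end Paths

section Segmentation

variable {V : Type*} {E : V → V → Prop} {u v : V} {k : ℕ}

def segChainFrom (k i : ℕ) : List (V ⊕ Fin k) :=
  ((List.finRange k).drop i).map Sum.inr

lemma segChainFrom_eq_cons {i : ℕ} (hi : i < k) :
    segChainFrom (V := V) k i = Sum.inr ⟨i, hi⟩ :: segChainFrom k (i + 1) := by
  rw [segChainFrom, List.drop_eq_getElem_cons (by simpa using hi)]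
  simp [segChainFrom]

lemma segChainFrom_eq_nil {i : ℕ} (hi : k ≤ i) : segChainFrom (V := V) k i = [] := by
  simpa [segChainFrom] using hi

lemma isChain_segChainFrom_append {t : List (V ⊕ Fin k)}
    (ht : (Sum.inl v :: t).IsChain (segE E u v k)) (i : ℕ) :
    (segChainFrom k i ++ Sum.inl v :: t).IsChain (segE E u v k) := by
  induction hn : k - i generalizing i with
  | zero => rwa [segChainFrom_eq_nil (by omega)]
  | succ n ih =>
    have hi : i < k := by omega
    rw [segChainFrom_eq_cons hi, List.cons_append]
    refine (ih (i + 1) (by omega)).cons ?_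
    by_cases hnext : i + 1 < k
    · simp [segChainFrom_eq_cons hnext, segE]
    · simp [segChainFrom_eq_nil (not_lt.1 hnext), segE]
      omega

variable [DecidableEq V] (u v k)

def segExpand : List V → List (V ⊕ Fin k)
  | [] => []
  | [a] => [Sum.inl a]
  | a :: b :: l =>
      Sum.inl a :: ((if a = u ∧ b = v then segChainFrom k 0 else []) ++ segExpand (b :: l))

variable {u v k}

lemma segExpand_cons_of_head? {a b : V} {l : List V} (h : l.head? = some b) :
    segExpand u v k (a :: l) =
      Sum.inl a :: ((if a = u ∧ b = v then segChainFrom k 0 else []) ++ segExpand u v k l) := by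
  obtain ⟨l, rfl⟩ := List.head?_eq_some_iff.1 h
  rfl

lemma exists_segExpand_eq_cons (a : V) (l : List V) :
    ∃ t, segExpand u v k (a :: l) = Sum.inl a :: t := by
  cases l <;> exact ⟨_, rfl⟩

lemma getLast?_segExpand (l : List V) :
    (segExpand u v k l).getLast? = l.getLast?.map Sum.inl := by
  induction l with
  | nil => rfl
  | cons a l ih =>
    cases l with
    | nil => rfl
    | cons b l =>
      obtain ⟨t, ht⟩ := exists_segExpand_eq_cons (u := u) (v := v) (k := k) b l
      rw [segExpand, ← List.cons_append, List.getLast?_append_of_ne_nil _ (by simp [ht]), ih,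
        List.getLast?_cons_cons]

lemma isChain_segExpand (hk : 0 < k) {l : List V} (hl : l.IsChain E) :
    (segExpand u v k l).IsChain (segE E u v k) := by
  induction l with
  | nil => exact List.isChain_nil
  | cons a l ih =>
    cases l with
    | nil => exact List.isChain_singleton _
    | cons b l =>
      obtain ⟨hab, hl⟩ := List.isChain_cons_cons.1 hl
      obtain ⟨t, ht⟩ := exists_segExpand_eq_cons (u := u) (v := v) (k := k) b l
      have hrest := ih hl
      rw [ht] at hrest
      rw [segExpand, ht]
      split_ifs with h
      · obtain ⟨rfl, rfl⟩ := h
        have hchain := isChain_segChainFrom_append hrest 0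
        rw [segChainFrom_eq_cons hk] at hchain ⊢
        exact List.isChain_cons_cons.2 ⟨⟨rfl, rfl⟩, hchain⟩
      · exact List.isChain_cons_cons.2 ⟨⟨hab, h⟩, hrest⟩

lemma IsPath.segExpand (hk : 0 < k) {a b : V} {l : List V} (h : IsPath E a b l) :
    IsPath (segE E u v k) (Sum.inl a) (Sum.inl b) (segExpand u v k l) := by
  obtain ⟨hne, hchain, hhead, hlast⟩ := h
  obtain ⟨a', l, rfl⟩ := List.exists_cons_of_ne_nil hne
  obtain rfl : a' = a := by simpa using hhead
  obtain ⟨t, ht⟩ := exists_segExpand_eq_cons (u := u) (v := v) (k := k) a' l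
  exact ⟨by simp [ht], isChain_segExpand hk hchain, by simp [ht],
    by rw [getLast?_segExpand, hlast]; rfl⟩

lemma filterMap_getLeft?_segExpand (l : List V) :
    (segExpand u v k l).filterMap Sum.getLeft? = l := by
  induction l with
  | nil => rfl
  | cons a l ih =>
    cases l with
    | nil => rfl
    | cons b l =>
      rw [segExpand]
      split_ifs <;> simp [segChainFrom, Function.comp_def, ih]

lemma segExpand_injective : Function.Injective (segExpand (V := V) u v k) :=
  Function.LeftInverse.injective filterMap_getLeft?_segExpand

lemma exists_segExpand_eq_of_isChain (huv : E u v) {b : V} {l' : List (V ⊕ Fin k)}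
    (hchain : l'.IsChain (segE E u v k)) (hlast : l'.getLast? = some (Sum.inl b)) :
    (∀ a, l'.head? = some (Sum.inl a) → ∃ l, IsPath E a b l ∧ segExpand u v k l = l') ∧
      (∀ i : Fin k, l'.head? = some (Sum.inr i) →
        ∃ l, IsPath E v b l ∧ segChainFrom k i ++ segExpand u v k l = l') := by
  induction l' with
  | nil => simp at hlast
  | cons x t ih =>
    cases t with
    | nil =>
      obtain rfl : x = Sum.inl b := by simpa using hlast
      refine ⟨fun a ha => ?_, fun i hi => by simp at hi⟩
      obtain rfl : b = a := by simpa using ha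
      exact ⟨[b], isPath_singleton E b, rfl⟩
    | cons y t =>
      obtain ⟨hxy, hchain⟩ := List.isChain_cons_cons.1 hchain
      obtain ⟨ihl, ihr⟩ := ih hchain (by rwa [List.getLast?_cons_cons] at hlast)
      constructor
      · rintro a ⟨⟩
        cases y with
        | inl b' =>
          obtain ⟨hab', hne⟩ := hxy
          obtain ⟨l, hl, hexp⟩ := ihl b' rfl
          refine ⟨a :: l, hl.cons hab', ?_⟩
          rw [segExpand_cons_of_head? hl.2.2.1, if_neg hne, List.nil_append, hexp]
        | inr i =>
          obtain ⟨rfl, hi⟩ := hxy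
          obtain ⟨l, hl, hexp⟩ := ihr i rfl
          refine ⟨a :: l, hl.cons huv, ?_⟩
          rw [segExpand_cons_of_head? hl.2.2.1, if_pos ⟨rfl, rfl⟩, ← hexp, hi]
      · rintro i ⟨⟩
        cases y with
        | inl b' =>
          obtain ⟨hi, rfl⟩ := hxy
          obtain ⟨l, hl, hexp⟩ := ihl _ rfl
          refine ⟨l, hl, ?_⟩
          rw [segChainFrom_eq_cons i.isLt, segChainFrom_eq_nil (by omega), ← hexp]
          rfl
        | inr j =>
          obtain ⟨l, hl, hexp⟩ := ihr j rfl
          refine ⟨l, hl, ?_⟩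
          rw [segChainFrom_eq_cons i.isLt, ← hxy, List.cons_append, hexp]

end Segmentation

section Weights

variable {V R : Type*} [CommRing R] {u v : V} {k : ℕ} (c : V → V → R) (w : Fin (k + 1) → R)

lemma pathWeight_segC_map_inr_append (s : List (Fin k)) (z : V ⊕ Fin k) (t : List (V ⊕ Fin k)) :
    pathWeight (segC c w) (s.map Sum.inr ++ z :: t) =
      (s.map fun i => w i.succ).prod * pathWeight (segC c w) (z :: t) := by
  induction s with
  | nil => simp
  | cons i s ih =>
    obtain ⟨y, hy⟩ : ∃ y, (s.map Sum.inr ++ z :: t).head? = some y := by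
      cases s <;> exact ⟨_, rfl⟩
    have hedge : segC c w (Sum.inr i) y = w i.succ := by cases y <;> rfl
    rw [List.map_cons, List.cons_append, pathWeight_cons_of_head? _ _ hy, hedge, ih,
      List.map_cons, List.prod_cons, mul_assoc]

lemma pathWeight_segC_cons_segChainFrom_append (hk : 0 < k) (a : V) (z : V ⊕ Fin k)
    (t : List (V ⊕ Fin k)) :
    pathWeight (segC c w) (Sum.inl a :: (segChainFrom k 0 ++ z :: t)) =
      (∏ j, w j) * pathWeight (segC c w) (z :: t) := by
  have hhead : (segChainFrom k 0 ++ z :: t).head? = some (Sum.inr ⟨0, hk⟩) := by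
    rw [segChainFrom_eq_cons hk]; rfl
  rw [pathWeight_cons_of_head? _ _ hhead, segChainFrom, List.drop_zero,
    pathWeight_segC_map_inr_append, Fin.prod_univ_succ, Fin.prod_univ_def, mul_assoc]
  rfl

variable [DecidableEq V]

lemma pathWeight_segExpand (hk : 0 < k) (hprod : ∏ j, w j = c u v) (l : List V) :
    pathWeight (segC c w) (segExpand u v k l) = pathWeight c l := by
  induction l with
  | nil => rfl
  | cons a l ih =>
    cases l with
    | nil => rfl
    | cons b l =>
      obtain ⟨t, ht⟩ := exists_segExpand_eq_cons (u := u) (v := v) (k := k) b l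
      rw [segExpand, ht, pathWeight_cons_cons]
      split_ifs with h
      · obtain ⟨rfl, rfl⟩ := h
        rw [pathWeight_segC_cons_segChainFrom_append c w hk, ← ht, ih, hprod]
      · rw [List.nil_append, pathWeight_cons_cons, ← ht, ih]
        rfl

end Weights

theorem pathSum_segE_segC {V R : Type*} [CommRing R] {E : V → V → Prop} {c : V → V → R}
    {u v : V} (huv : E u v) {k : ℕ} (hk : 0 < k) {w : Fin (k + 1) → R}
    (hprod : ∏ j, w j = c u v) (a b : V) :
    pathSum (segE E u v k) (segC c w) (Sum.inl a) (Sum.inl b) = pathSum E c a b := by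
  classical
  refine (finsum_mem_eq_of_bijOn (segExpand u v k)
    ⟨fun l hl => hl.segExpand hk, segExpand_injective.injOn, fun l' hl' => ?_⟩
    fun l _ => (pathWeight_segExpand c w hk hprod l).symm).symm
  obtain ⟨-, hchain, hhead, hlast⟩ := hl'
  exact (exists_segExpand_eq_of_isChain huv hchain hlast).1 a hhead

theorem stmt11_general {V R : Type*} [CommRing R] (E : V → V → Prop)
    (c : V → V → R)
    (u v : V) (huv : E u v) (k : ℕ) (hk : 0 < k)
    (w : Fin (k + 1) → R)
    (hw : ∃ j₀, w j₀ = c u v ∧ ∀ j, j ≠ j₀ → w j = 1) :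
    ∀ a b : V,
      pathSum (segE E u v k) (segC c w) (Sum.inl a) (Sum.inl b) = pathSum E c a b := by
  obtain ⟨j₀, hj₀, hone⟩ := hw
  exact pathSum_segE_segC huv hk (by rw [Fintype.prod_eq_single j₀ hone, hj₀])

/-- Segmenting a cross-level edge preserves path sums: replacing the edge `u → v` of
weight `c u v` by a chain through `k ≥ 1` new vertices, where one edge of the chain has
weight `c u v` and all the others have weight `1`, leaves the path sum between any two
original vertices unchanged. -/
theorem stmt11 {V R : Type*} [Fintype V] [CommRing R] (E : V → V → Prop)
    (hacyc : ∀ a : V, ¬ Relation.TransGen E a a) (c : V → V → R)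
    (u v : V) (huv : E u v) (k : ℕ) (hk : 0 < k)
    (w : Fin (k + 1) → R)
    (hw : ∃ j₀, w j₀ = c u v ∧ ∀ j, j ≠ j₀ → w j = 1) :
    ∀ a b : V,
      pathSum (segE E u v k) (segC c w) (Sum.inl a) (Sum.inl b) = pathSum E c a b :=
  stmt11_general E c u v huv k hk w hw
end

section
/- Face elimination reduces the number of edges of the extended line graph by at least one while preserving all source-to-sink path sums, provided absorption occurs: if in a weighted directed graph H a vertex k exists with predecessors equal to the predecessors of i and successors equal to the successors of j, then deleting the edge (i,j) and updating c(k) := c(k) + c(j)·c(i) preserves, for every source s and sink t, the quantity Σ_{paths p: s→t} Π_{v interior to p} c(v), where path weight is the product of interior-vertex weights. -/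
/-!
Split the paths from `s` to `t` according to whether they pass through the edge `(i, j)`. Those
that do not are exactly the paths after the deletion. Those that do correspond bijectively to the
paths through `k` after the deletion, by replacing the segment `i, j` with `k`: this preserves
paths because `k` has the predecessors of `i` and the successors of `j`, and it is well defined
because acyclicity makes every path simple. Along a path through `k`, the new weight
`c k + c j * c i` splits its weight into its old weight plus the weight of its partner through
`(i, j)`.
-/

open scoped Classical
/-- The weight of a path in a vertex-weighted graph: the product of the weights of the
interior vertices of the path (all vertices except the two endpoints). -/
def interiorWeight {W R : Type*} [CommRing R] (c : W → R) (l : List W) : R :=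
  (((l.drop 1).dropLast).map c).prod

section

open Relation

variable {W : Type*}

def deleteEdge (F : W → W → Prop) (i j : W) : W → W → Prop :=
  fun a b => F a b ∧ ¬(a = i ∧ b = j)

namespace List

variable {F : W → W → Prop}

theorem IsChain.nodup_of_acyclic (hF : ∀ a, ¬TransGen F a a) {l : List W} (h : l.IsChain F) :
    l.Nodup :=
  nodup_iff_pairwise_ne.2 <| (isChain_iff_pairwise.1 (h.imp fun _ _ => TransGen.single)).imp
    fun {a _} hab => by rintro rfl; exact hF a hab

theorem isChain_deleteEdge_iff {x y : W} {l : List W} :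
    l.IsChain (deleteEdge F x y) ↔ l.IsChain F ∧ ¬[x, y] <:+: l := by
  simp only [isChain_iff_forall_rel_of_append_cons_cons, deleteEdge]
  constructor
  · intro h
    refine ⟨fun a b l₁ l₂ e => (h e).1, ?_⟩
    rintro ⟨l₁, l₂, rfl⟩
    exact (h (l₁ := l₁) (l₂ := l₂) (by simp)).2 ⟨rfl, rfl⟩
  · rintro ⟨h, hxy⟩ a b l₁ l₂ rfl
    exact ⟨h rfl, by rintro ⟨rfl, rfl⟩; exact hxy ⟨l₁, l₂, by simp⟩⟩

theorem isChain_append_singleton_congr {x y : W} {l : List W} (h : ∀ a, F a x ↔ F a y) :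
    (l ++ [x]).IsChain F ↔ (l ++ [y]).IsChain F := by
  simp [isChain_append, h]

theorem isChain_cons_congr {x y : W} {l : List W} (h : ∀ b, F x b ↔ F y b) :
    (x :: l).IsChain F ↔ (y :: l).IsChain F := by
  simp [isChain_cons, h]

def substitute [DecidableEq W] (l : List W) (k : W) (m : List W) : List W :=
  l.flatMap fun x => if x = k then m else [x]

variable [DecidableEq W] {k : W} {m l l₁ l₂ : List W}

theorem substitute_of_notMem (h : k ∉ l) : l.substitute k m = l := by
  rw [substitute, flatMap_congr fun x hx => if_neg (ne_of_mem_of_not_mem hx h), flatMap_singleton']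

theorem substitute_append_cons (h₁ : k ∉ l₁) (h₂ : k ∉ l₂) :
    (l₁ ++ k :: l₂).substitute k m = l₁ ++ m ++ l₂ := by
  have e₁ := substitute_of_notMem (m := m) h₁
  have e₂ := substitute_of_notMem (m := m) h₂
  simp only [substitute] at e₁ e₂ ⊢
  simp [flatMap_append, e₁, e₂]

end List

section IsPath

variable {F : W → W → Prop} {s t x : W} {l l₁ l₂ m : List W}

theorem isPath_iff :
    IsPath F s t l ↔ l ≠ [] ∧ l.IsChain F ∧ l.head? = some s ∧ l.getLast? = some t :=
  Iff.rfl

theorem setOf_isPath_finite [Fintype W] (hF : ∀ a, ¬TransGen F a a) (s t : W) :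
    {l | IsPath F s t l}.Finite :=
  (List.finite_length_le W (Fintype.card W)).subset fun _ hl =>
    (List.IsChain.nodup_of_acyclic hF hl.2.1).length_le_card

theorem isPath_deleteEdge_iff {i j : W} :
    IsPath (deleteEdge F i j) s t l ↔ IsPath F s t l ∧ ¬[i, j] <:+: l := by
  simp only [isPath_iff, List.isChain_deleteEdge_iff]
  tauto

theorem isPath_append_append_iff (h₁ : l₁ ≠ []) (h₂ : l₂ ≠ []) :
    IsPath F s t (l₁ ++ m ++ l₂) ↔
      (l₁ ++ m ++ l₂).IsChain F ∧ l₁.head? = some s ∧ l₂.getLast? = some t := by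
  simp [isPath_iff, List.head?_append, List.getLast?_append, h₁, h₂]

theorem IsPath.append_cons_left_ne_nil (hs : ∀ a, ¬F a s) (h : IsPath F s t (l₁ ++ x :: l₂))
    (hx : ∃ a, F a x) : l₁ ≠ [] := by
  rintro rfl
  obtain ⟨a, ha⟩ := hx
  obtain rfl : x = s := by simpa using h.2.2.1
  exact hs a ha

theorem IsPath.append_cons_right_ne_nil (ht : ∀ b, ¬F t b) (h : IsPath F s t (l₁ ++ x :: l₂))
    (hx : ∃ b, F x b) : l₂ ≠ [] := by
  rintro rfl
  obtain ⟨b, hb⟩ := hx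
  obtain rfl : x = t := by simpa using h.2.2.2
  exact ht b hb

end IsPath

section interiorWeight

variable {R : Type*} [CommRing R] {c c' : W → R} {l l₁ l₂ m : List W}

theorem interiorWeight_congr (h : ∀ x ∈ l, c x = c' x) :
    interiorWeight c l = interiorWeight c' l := by
  refine congrArg List.prod (List.map_congr_left fun x hx => h x ?_)
  exact (List.drop_subset 1 l) ((List.dropLast_subset _) hx)

theorem interiorWeight_append_append (h₁ : l₁ ≠ []) (h₂ : l₂ ≠ []) :
    interiorWeight c (l₁ ++ m ++ l₂) = (m.map c).prod * interiorWeight c (l₁ ++ l₂) := by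
  obtain ⟨a, l₁, rfl⟩ := List.exists_cons_of_ne_nil h₁
  simp [interiorWeight, h₂, mul_left_comm]

theorem interiorWeight_absorb {i j k : W} (hk : c' k = c k + c j * c i)
    (hc' : ∀ x, x ≠ k → c' x = c x) (h₁ : l₁ ≠ []) (h₂ : l₂ ≠ [])
    (hk₁ : k ∉ l₁) (hk₂ : k ∉ l₂) :
    interiorWeight c' (l₁ ++ k :: l₂) =
      interiorWeight c (l₁ ++ k :: l₂) + interiorWeight c (l₁ ++ i :: j :: l₂) := by
  have hrest : interiorWeight c' (l₁ ++ l₂) = interiorWeight c (l₁ ++ l₂) :=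
    interiorWeight_congr fun x hx =>
      hc' x (ne_of_mem_of_not_mem hx (List.not_mem_append hk₁ hk₂))
  rw [show l₁ ++ k :: l₂ = l₁ ++ [k] ++ l₂ by simp,
    show l₁ ++ i :: j :: l₂ = l₁ ++ [i, j] ++ l₂ by simp,
    interiorWeight_append_append h₁ h₂, interiorWeight_append_append h₁ h₂,
    interiorWeight_append_append h₁ h₂, hrest]
  simp only [List.map_cons, List.map_nil, List.prod_cons, List.prod_nil, mul_one, hk]
  ring

end interiorWeight

structure AbsorbsEdge (F : W → W → Prop) (i j k : W) : Prop where
  rel : F i j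
  exists_pred : ∃ a, F a i
  exists_succ : ∃ b, F j b
  ne_left : k ≠ i
  pred_iff : ∀ a, F a k ↔ F a i
  succ_iff : ∀ b, F k b ↔ F j b

namespace AbsorbsEdge

variable {F : W → W → Prop} {i j k s t : W} {l₁ l₂ : List W}

theorem exists_pred_absorber (h : AbsorbsEdge F i j k) : ∃ a, F a k := by
  simpa only [h.pred_iff] using h.exists_pred

theorem exists_succ_absorber (h : AbsorbsEdge F i j k) : ∃ b, F k b := by
  simpa only [h.succ_iff] using h.exists_succ

theorem isChain_append_cons_iff (h : AbsorbsEdge F i j k) :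
    (l₁ ++ k :: l₂).IsChain F ↔ (l₁ ++ i :: j :: l₂).IsChain F := by
  rw [List.isChain_split, List.isChain_append_cons_cons,
    List.isChain_append_singleton_congr h.pred_iff, List.isChain_cons_congr h.succ_iff]
  simp [h.rel]

theorem isPath_append_cons_iff (h : AbsorbsEdge F i j k) (hs : ∀ a, ¬F a s)
    (ht : ∀ b, ¬F t b) :
    IsPath F s t (l₁ ++ k :: l₂) ↔ IsPath F s t (l₁ ++ i :: j :: l₂) := by
  suffices key : l₁ ≠ [] → l₂ ≠ [] →
      (IsPath F s t (l₁ ++ k :: l₂) ↔ IsPath F s t (l₁ ++ i :: j :: l₂)) by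
    refine ⟨fun hp => (key (hp.append_cons_left_ne_nil hs h.exists_pred_absorber)
      (hp.append_cons_right_ne_nil ht h.exists_succ_absorber)).1 hp, fun hp => ?_⟩
    have hp' : IsPath F s t (l₁ ++ [i] ++ j :: l₂) := by simpa using hp
    exact (key (hp.append_cons_left_ne_nil hs h.exists_pred)
      (hp'.append_cons_right_ne_nil ht h.exists_succ)).2 hp
  intro h₁ h₂
  have e₁ : l₁ ++ k :: l₂ = l₁ ++ [k] ++ l₂ := by simp
  have e₂ : l₁ ++ i :: j :: l₂ = l₁ ++ [i, j] ++ l₂ := by simp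
  rw [e₁, e₂, isPath_append_append_iff h₁ h₂, isPath_append_append_iff h₁ h₂, ← e₁,
    ← e₂]
  exact and_congr_left' h.isChain_append_cons_iff

theorem notMem_of_isPath (hF : ∀ a, ¬TransGen F a a) (h : AbsorbsEdge F i j k)
    (hs : ∀ a, ¬F a s) (ht : ∀ b, ¬F t b) (hp : IsPath F s t (l₁ ++ k :: l₂)) :
    k ∉ l₁ ∧ k ∉ l₂ ∧ i ∉ l₁ ∧ i ∉ l₂ ∧ j ∉ l₁ ∧ j ∉ l₂ := by
  have hk := List.IsChain.nodup_of_acyclic hF hp.2.1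
  have hij := List.IsChain.nodup_of_acyclic hF ((h.isPath_append_cons_iff hs ht).1 hp).2.1
  simp only [List.nodup_middle, List.nodup_cons, List.mem_append, List.mem_cons, not_or] at hk hij
  tauto

theorem substitute_of_isPath (hF : ∀ a, ¬TransGen F a a) (h : AbsorbsEdge F i j k)
    (hs : ∀ a, ¬F a s) (ht : ∀ b, ¬F t b) (hp : IsPath F s t (l₁ ++ k :: l₂)) :
    (l₁ ++ k :: l₂).substitute k [i, j] = l₁ ++ i :: j :: l₂ := by
  obtain ⟨hk₁, hk₂, -⟩ := h.notMem_of_isPath hF hs ht hp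
  simp [List.substitute_append_cons hk₁ hk₂]

theorem substitute_substitute_of_isPath (hF : ∀ a, ¬TransGen F a a) (h : AbsorbsEdge F i j k)
    (hs : ∀ a, ¬F a s) (ht : ∀ b, ¬F t b) (hp : IsPath F s t (l₁ ++ k :: l₂)) :
    ((l₁ ++ i :: j :: l₂).substitute j []).substitute i [k] = l₁ ++ k :: l₂ := by
  obtain ⟨-, -, hi₁, hi₂, hj₁, hj₂⟩ := h.notMem_of_isPath hF hs ht hp
  have hij : i ≠ j := fun e => hF j (.single (e ▸ h.rel))
  have hj : j ∉ l₁ ++ [i] := by simp [hj₁, hij.symm]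
  rw [show l₁ ++ i :: j :: l₂ = l₁ ++ [i] ++ j :: l₂ by simp,
    List.substitute_append_cons hj hj₂, List.append_nil, List.append_assoc, List.singleton_append,
    List.substitute_append_cons hi₁ hi₂]
  simp

theorem isPath_deleteEdge_of_isPath (hF : ∀ a, ¬TransGen F a a) (h : AbsorbsEdge F i j k)
    (hs : ∀ a, ¬F a s) (ht : ∀ b, ¬F t b) (hp : IsPath F s t (l₁ ++ k :: l₂)) :
    IsPath (deleteEdge F i j) s t (l₁ ++ k :: l₂) := by
  obtain ⟨-, -, hi₁, hi₂, -⟩ := h.notMem_of_isPath hF hs ht hp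
  refine isPath_deleteEdge_iff.2 ⟨hp, fun hij => ?_⟩
  have : i ∈ l₁ ++ k :: l₂ := hij.subset (by simp)
  simp [hi₁, hi₂, h.ne_left.symm] at this

theorem bijOn_substitute (hF : ∀ a, ¬TransGen F a a) (h : AbsorbsEdge F i j k)
    (hs : ∀ a, ¬F a s) (ht : ∀ b, ¬F t b) :
    Set.BijOn (·.substitute k [i, j])
      ({l | IsPath (deleteEdge F i j) s t l} ∩ {l | k ∈ l})
      ({l | IsPath F s t l} ∩ {l | [i, j] <:+: l}) := by
  have mem_through {l} (hl : l ∈ {l | IsPath (deleteEdge F i j) s t l} ∩ {l | k ∈ l}) :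
      ∃ l₁ l₂, l = l₁ ++ k :: l₂ ∧ IsPath F s t (l₁ ++ k :: l₂) := by
    obtain ⟨hp, hk⟩ := hl
    obtain ⟨l₁, l₂, rfl⟩ := List.append_of_mem hk
    exact ⟨l₁, l₂, rfl, (isPath_deleteEdge_iff.1 hp).1⟩
  have mem_using {l} (hl : l ∈ {l | IsPath F s t l} ∩ {l | [i, j] <:+: l}) :
      ∃ l₁ l₂, l = l₁ ++ i :: j :: l₂ ∧ IsPath F s t (l₁ ++ k :: l₂) := by
    obtain ⟨hp, l₁, l₂, rfl⟩ := hl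
    refine ⟨l₁, l₂, by simp, (h.isPath_append_cons_iff hs ht).2 ?_⟩
    simpa using hp
  refine Set.InvOn.bijOn (f' := fun l => (l.substitute j []).substitute i [k]) ⟨?_, ?_⟩ ?_ ?_
  · rintro _ hl
    obtain ⟨l₁, l₂, rfl, hp⟩ := mem_through hl
    simp only [h.substitute_of_isPath hF hs ht hp, h.substitute_substitute_of_isPath hF hs ht hp]
  · rintro _ hl
    obtain ⟨l₁, l₂, rfl, hp⟩ := mem_using hl
    simp only [h.substitute_substitute_of_isPath hF hs ht hp, h.substitute_of_isPath hF hs ht hp]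
  · rintro _ hl
    obtain ⟨l₁, l₂, rfl, hp⟩ := mem_through hl
    dsimp only
    rw [h.substitute_of_isPath hF hs ht hp]
    exact ⟨(h.isPath_append_cons_iff hs ht).1 hp, l₁, l₂, by simp⟩
  · rintro _ hl
    obtain ⟨l₁, l₂, rfl, hp⟩ := mem_using hl
    dsimp only
    rw [h.substitute_substitute_of_isPath hF hs ht hp]
    exact ⟨h.isPath_deleteEdge_of_isPath hF hs ht hp, by simp⟩

theorem pathSum_eq [Fintype W] {R : Type*} [CommRing R] (hF : ∀ a, ¬TransGen F a a)
    (h : AbsorbsEdge F i j k) (hs : ∀ a, ¬F a s) (ht : ∀ b, ¬F t b) {c c' : W → R}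
    (hk : c' k = c k + c j * c i) (hc' : ∀ x, x ≠ k → c' x = c x) :
    ∑ᶠ l ∈ {l | IsPath F s t l}, interiorWeight c l =
      ∑ᶠ l ∈ {l | IsPath (deleteEdge F i j) s t l}, interiorWeight c' l := by
  set A := {l | IsPath F s t l}
  set A' := {l | IsPath (deleteEdge F i j) s t l}
  set K := {l : List W | k ∈ l}
  set U := {l : List W | [i, j] <:+: l}
  have hA : A.Finite := setOf_isPath_finite hF s t
  have hA' : A'.Finite := hA.subset fun l hl => (isPath_deleteEdge_iff.1 hl).1
  have hA'U : A' = A \ U := Set.ext fun l => isPath_deleteEdge_iff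
  have weight_through : ∀ l ∈ A' ∩ K, interiorWeight c' l =
      interiorWeight c l + interiorWeight c (l.substitute k [i, j]) := by
    rintro _ ⟨hp', hkl⟩
    obtain ⟨l₁, l₂, rfl⟩ := List.append_of_mem hkl
    have hp := (isPath_deleteEdge_iff.1 hp').1
    obtain ⟨hk₁, hk₂, -⟩ := h.notMem_of_isPath hF hs ht hp
    rw [h.substitute_of_isPath hF hs ht hp]
    exact interiorWeight_absorb hk hc' (hp.append_cons_left_ne_nil hs h.exists_pred_absorber)
      (hp.append_cons_right_ne_nil ht h.exists_succ_absorber) hk₁ hk₂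
  have weight_avoid : ∀ l ∈ A' \ K, interiorWeight c' l = interiorWeight c l :=
    fun l hl => interiorWeight_congr fun x hx => hc' x (ne_of_mem_of_not_mem hx hl.2)
  calc ∑ᶠ l ∈ A, interiorWeight c l
      = ∑ᶠ l ∈ A ∩ U, interiorWeight c l + ∑ᶠ l ∈ A \ U, interiorWeight c l :=
        (finsum_mem_inter_add_sdiff U hA).symm
    _ = ∑ᶠ l ∈ A' ∩ K, interiorWeight c (l.substitute k [i, j]) +
          ∑ᶠ l ∈ A', interiorWeight c l := by
        rw [finsum_mem_eq_of_bijOn _ (h.bijOn_substitute hF hs ht) fun _ _ => rfl, hA'U]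
    _ = ∑ᶠ l ∈ A' ∩ K, (interiorWeight c l + interiorWeight c (l.substitute k [i, j])) +
          ∑ᶠ l ∈ A' \ K, interiorWeight c l := by
        rw [finsum_mem_add_distrib (hA'.inter_of_left K), ← finsum_mem_inter_add_sdiff K hA']
        ring
    _ = ∑ᶠ l ∈ A' ∩ K, interiorWeight c' l + ∑ᶠ l ∈ A' \ K, interiorWeight c' l := by
        rw [finsum_mem_congr rfl weight_through, finsum_mem_congr rfl weight_avoid]
    _ = ∑ᶠ l ∈ A', interiorWeight c' l := finsum_mem_inter_add_sdiff K hA'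

end AbsorbsEdge

end

theorem stmt19_general {W R : Type*} [Fintype W] [CommRing R] (F : W → W → Prop)
    (hacyc : ∀ a : W, ¬ Relation.TransGen F a a) (c : W → R)
    (i j k : W) (hij : F i j)
    (hi : (∃ a, F a i) ∧ (∃ b, F i b)) (hj : (∃ a, F a j) ∧ (∃ b, F j b))
    (hki : k ≠ i)
    (hpred : ∀ a, F a k ↔ F a i) (hsucc : ∀ b, F k b ↔ F j b) :
    ∀ s t : W, (∀ a, ¬ F a s) → (∀ b, ¬ F t b) →
      (∑ᶠ l ∈ {l : List W | IsPath F s t l}, interiorWeight c l)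
      = ∑ᶠ l ∈ {l : List W | IsPath (fun a b => F a b ∧ ¬(a = i ∧ b = j)) s t l},
          interiorWeight (fun x => if x = k then c k + c j * c i else c x) l := by
  intro s t hs ht
  exact AbsorbsEdge.pathSum_eq hacyc ⟨hij, hi.1, hj.2, hki, hpred, hsucc⟩ hs ht (if_pos rfl)
    fun x hx => if_neg hx

/-- Correctness of the absorption step of face elimination: in a finite vertex-weighted
DAG, if `k` has the same predecessors as `i` and the same successors as `j`, then deleting
the edge `(i, j)` while updating `c k := c k + c j * c i` preserves, for every source `s`
and sink `t`, the sum over paths from `s` to `t` of the products of interior vertex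
weights. -/
theorem stmt19 {W R : Type*} [Fintype W] [CommRing R] (F : W → W → Prop)
    (hacyc : ∀ a : W, ¬ Relation.TransGen F a a) (c : W → R)
    (i j k : W) (hij : F i j)
    (hi : (∃ a, F a i) ∧ (∃ b, F i b)) (hj : (∃ a, F a j) ∧ (∃ b, F j b))
    (hki : k ≠ i) (hkj : k ≠ j)
    (hpred : ∀ a, F a k ↔ F a i) (hsucc : ∀ b, F k b ↔ F j b) :
    ∀ s t : W, (∀ a, ¬ F a s) → (∀ b, ¬ F t b) →
      (∑ᶠ l ∈ {l : List W | IsPath F s t l}, interiorWeight c l)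
      = ∑ᶠ l ∈ {l : List W | IsPath (fun a b => F a b ∧ ¬(a = i ∧ b = j)) s t l},
          interiorWeight (fun x => if x = k then c k + c j * c i else c x) l :=
  stmt19_general F hacyc c i j k hij hi hj hki hpred hsucc
end
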